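/- ∫_0^1 e^t · log(−log t) dt = −∑_{k=1}^∞ (log k)/k! − γ·(e − 1). -/

import Mathlib

/-!
Substituting `t = exp (-u)` turns the integral into `∫₀^∞ exp (-u) exp (exp (-u)) log u du`.
Expanding `exp (exp (-u))` into its power series gives the terms `exp (-(n+1) u) log u / n!`,
which may be integrated one by one since `∑ₙ 1/n!` converges. Each term is evaluated by scaling
from `∫₀^∞ exp (-u) log u du = Γ'(1) = -γ`, and the constant parts add up to `-γ (e - 1)`.
-/

open MeasureTheory Set Real
open scoped Nat

local notation "γ" => eulerMascheroniConstant

theorem integral_Ioo_zero_one_eq_integral_Ioi_exp_neg {E : Type*} [NormedAddCommGroup E]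
    [NormedSpace ℝ E] (g : ℝ → E) :
    ∫ t in Ioo 0 1, g t = ∫ u in Ioi 0, exp (-u) • g (exp (-u)) := by
  have himage : (fun u ↦ exp (-u)) '' Ioi 0 = Ioo 0 1 := by
    rw [← exp_zero, ← image_exp_Iio, ← image_image exp Neg.neg, image_neg_Ioi, neg_zero]
  have hderiv (u : ℝ) (_ : u ∈ Ioi (0 : ℝ)) :
      HasDerivWithinAt (fun u ↦ exp (-u)) (-exp (-u)) (Ioi 0) u := by
    simpa using ((hasDerivAt_neg u).exp).hasDerivWithinAt
  have hinj : InjOn (fun u ↦ exp (-u)) (Ioi 0) := fun a _ b _ h ↦ by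
    simpa using exp_injective h
  rw [← himage, integral_image_eq_integral_abs_deriv_smul measurableSet_Ioi hderiv hinj]
  simp [abs_of_pos (exp_pos _)]

theorem integral_exp_neg_mul_log : ∫ u in Ioi 0, exp (-u) * log u = -γ := by
  have hΓ : HasDerivAt Complex.GammaIntegral (-γ : ℂ) 1 :=
    Complex.hasDerivAt_Gamma_one.congr_of_eventuallyEq <| by
      filter_upwards [(isOpen_lt continuous_const Complex.continuous_re).mem_nhds
        (show (0 : ℝ) < (1 : ℂ).re by norm_num)] with s hs
      exact (Complex.Gamma_eq_integral hs).symm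
  have h := (Complex.hasDerivAt_GammaIntegral (s := 1) (by norm_num)).unique hΓ
  apply Complex.ofReal_injective
  rw [← integral_complex_ofReal, Complex.ofReal_neg, ← h]
  congr 1 with t
  rw [sub_self, Complex.cpow_zero, one_mul, mul_comm, Complex.ofReal_mul]

-- A non-integrable function has integral `0`, and `γ ≠ 0`.
theorem integrableOn_exp_neg_mul_log : IntegrableOn (fun u ↦ exp (-u) * log u) (Ioi 0) :=
  Integrable.of_integral_ne_zero <| by
    rw [integral_exp_neg_mul_log, neg_ne_zero]
    linarith [one_half_lt_eulerMascheroniConstant]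

theorem exp_neg_mul_mul_log_eqOn {s : ℝ} (hs : 0 < s) :
    EqOn (fun u ↦ exp (-(s * u)) * log u)
      (fun u ↦ exp (-(s * u)) * log (s * u) - log s * exp (-(s * u))) (Ioi 0) := by
  intro u hu
  simp only [log_mul hs.ne' (ne_of_gt hu)]
  ring

theorem integrableOn_exp_neg_mul_mul_log {s : ℝ} (hs : 0 < s) :
    IntegrableOn (fun u ↦ exp (-(s * u)) * log u) (Ioi 0) := by
  refine IntegrableOn.congr_fun ?_ (exp_neg_mul_mul_log_eqOn hs).symm measurableSet_Ioi
  refine (integrableOn_Ioi_comp_mul_left_iff (fun v ↦ exp (-v) * log v - log s * exp (-v)) 0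
    hs).mpr ?_
  rw [mul_zero]
  exact integrableOn_exp_neg_mul_log.sub ((integrableOn_exp_neg_Ioi 0).const_mul _)

theorem integral_exp_neg_mul_mul_log {s : ℝ} (hs : 0 < s) :
    ∫ u in Ioi 0, exp (-(s * u)) * log u = -(γ + log s) / s := by
  rw [setIntegral_congr_fun measurableSet_Ioi (exp_neg_mul_mul_log_eqOn hs),
    integral_comp_mul_left_Ioi (fun v ↦ exp (-v) * log v - log s * exp (-v)) 0 hs, mul_zero,
    integral_sub integrableOn_exp_neg_mul_log ((integrableOn_exp_neg_Ioi 0).const_mul _),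
    integral_const_mul, integral_exp_neg_mul_log, integral_exp_neg_Ioi_zero, smul_eq_mul]
  ring

theorem integral_exp_neg_mul_log_div_factorial (n : ℕ) :
    ∫ u in Ioi 0, exp (-((n + 1) * u)) * log u / (n ! : ℝ)
      = -(γ + log (n + 1)) / (n + 1)! := by
  rw [integral_div, integral_exp_neg_mul_mul_log (by positivity), Nat.factorial_succ]
  push_cast
  field_simp

theorem hasSum_exp_neg_mul_log_div_factorial (u : ℝ) :
    HasSum (fun n : ℕ ↦ exp (-((n + 1) * u)) * log u / (n ! : ℝ))
      (exp (-u) * exp (exp (-u)) * log u) := by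
  have h := ((NormedSpace.expSeries_div_hasSum_exp (exp (-u))).mul_left (exp (-u))).mul_right
    (log u)
  rw [← exp_eq_exp_ℝ] at h
  refine h.congr_fun fun n ↦ ?_
  rw [← exp_nat_mul, mul_div_assoc', ← exp_add]
  ring_nf

theorem integral_norm_exp_neg_mul_log_div_factorial_le (n : ℕ) :
    ∫ u in Ioi 0, ‖exp (-((n + 1) * u)) * log u / (n ! : ℝ)‖
      ≤ (∫ u in Ioi 0, ‖exp (-u) * log u‖) / (n ! : ℝ) := by
  rw [← integral_div]
  refine setIntegral_mono_on ((integrableOn_exp_neg_mul_mul_log (by positivity)).div_const _).norm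
    (integrableOn_exp_neg_mul_log.norm.div_const _) measurableSet_Ioi fun u (hu : 0 < u) ↦ ?_
  rw [norm_div, norm_mul, norm_mul, RCLike.norm_natCast, norm_of_nonneg (exp_pos _).le,
    norm_of_nonneg (exp_pos _).le]
  gcongr
  nlinarith [n.cast_nonneg (α := ℝ)]

theorem hasSum_integral_exp_neg_mul_log_div_factorial :
    HasSum (fun n : ℕ ↦ ∫ u in Ioi 0, exp (-((n + 1) * u)) * log u / (n ! : ℝ))
      (∫ u in Ioi 0, exp (-u) * exp (exp (-u)) * log u) := by
  have hsum :
      Summable fun n : ℕ ↦ ∫ u in Ioi 0, ‖exp (-((n + 1) * u)) * log u / (n ! : ℝ)‖ := by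
    refine .of_nonneg_of_le (fun n ↦ integral_nonneg fun u ↦ norm_nonneg _)
      integral_norm_exp_neg_mul_log_div_factorial_le ?_
    have h := (Real.summable_pow_div_factorial 1).mul_left (∫ u in Ioi 0, ‖exp (-u) * log u‖)
    simpa only [one_pow, mul_one_div] using h
  have h := hasSum_integral_of_summable_integral_norm
    (fun n ↦ (integrableOn_exp_neg_mul_mul_log (by positivity)).div_const _) hsum
  rwa [integral_congr_ae (ae_of_all _ fun u ↦ (hasSum_exp_neg_mul_log_div_factorial u).tsum_eq)]
    at h

theorem hasSum_inv_factorial_succ : HasSum (fun n : ℕ ↦ ((n + 1)! : ℝ)⁻¹) (exp 1 - 1) := by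
  have h := NormedSpace.expSeries_div_hasSum_exp (1 : ℝ)
  rw [← exp_eq_exp_ℝ, ← hasSum_nat_add_iff' 1] at h
  simpa using h

theorem stmt_15 :
    ∫ t in Set.Ioo (0 : ℝ) 1, Real.exp t * Real.log (-Real.log t)
      = -(∑' k : ℕ, Real.log (k + 1) / (k + 1).factorial)
          - Real.eulerMascheroniConstant * (Real.exp 1 - 1) := by
  have hsubst : ∫ t in Ioo (0 : ℝ) 1, exp t * log (-log t)
      = ∫ u in Ioi 0, exp (-u) * exp (exp (-u)) * log u := by
    simp only [integral_Ioo_zero_one_eq_integral_Ioi_exp_neg, log_exp, neg_neg, smul_eq_mul,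
      mul_assoc]
  have hseries := hasSum_integral_exp_neg_mul_log_div_factorial
  simp only [integral_exp_neg_mul_log_div_factorial] at hseries
  have hlog : HasSum (fun k : ℕ ↦ log (k + 1) / (k + 1)!)
      (-γ * (exp 1 - 1) - ∫ u in Ioi 0, exp (-u) * exp (exp (-u)) * log u) :=
    ((hasSum_inv_factorial_succ.mul_left (-γ)).sub hseries).congr_fun fun k ↦ by ring
  rw [hsubst, hlog.tsum_eq]
  ring
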